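/- A planar rooted tree Γ ∈ 𝒯_n (a finite planar rooted tree with n leaves in which every internal vertex has at least two children) is a binary tree (every internal vertex has exactly two children) if and only if ∑_{v ∈ R(Γ)} d(v) = n − 1. -/

import Mathlib

/-- A finite planar rooted tree in which every internal vertex has at least two
children: a vertex is either a leaf, or a node with children `a :: b :: r`
(ordered from left to right). -/
inductive PTree : Type
  | leaf : PTree
  | node : PTree → PTree → List PTree → PTree

namespace PTree

/-- The ordered list of children (subtrees) of the root. -/
def childrenL : PTree → List PTree
  | leaf => []
  | node a b r => a :: b :: r

/-- The subtree at a given path (a vertex is encoded by the list of child indices,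
read from the root). -/
def subtreeAt : List ℕ → PTree → Option PTree
  | [], t => some t
  | i :: p, t =>
      match (childrenL t)[i]? with
      | some c => subtreeAt p c
      | none => none

/-- `p` is a vertex of `t`. -/
def IsVertex (t : PTree) (p : List ℕ) : Prop := (subtreeAt p t).isSome

/-- `p` is a leaf of `t`. -/
def IsLeafV (t : PTree) (p : List ℕ) : Prop := subtreeAt p t = some leaf

/-- `p` is an internal vertex of `t`. -/
def IsInternalV (t : PTree) (p : List ℕ) : Prop :=
  ∃ a b r, subtreeAt p t = some (node a b r)

/-- The number of children of the vertex `p`. -/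
def childCount (t : PTree) (p : List ℕ) : ℕ :=
  ((subtreeAt p t).map fun s => (childrenL s).length).getD 0

/-- The rightmost edge out of the internal vertex `p`, i.e. the edge joining `p` to its
last child `q` (edges are directed towards the root, so the edge is `q → p`). -/
def Redge (t : PTree) (p q : List ℕ) : Prop :=
  IsInternalV t p ∧ q = p ++ [childCount t p - 1] ∧ IsVertex t q

/-- The vertex set `B` is connected through rightmost edges of `t` lying inside `B`. -/
def ConnB (t : PTree) (B : Set (List ℕ)) : Prop :=
  ∀ p ∈ B, ∀ q ∈ B,
    Relation.ReflTransGen (fun x y => (Redge t x y ∨ Redge t y x) ∧ x ∈ B ∧ y ∈ B) p q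

/-- `B` is (the vertex set of) a rightmost branch of `t`: a maximal connected subgraph
all of whose edges are rightmost edges of `t`. -/
def IsRBranch (t : PTree) (B : Set (List ℕ)) : Prop :=
  B.Nonempty ∧ (∀ p ∈ B, IsVertex t p) ∧ ConnB t B ∧
    ∀ B', B ⊆ B' → (∀ p ∈ B', IsVertex t p) → ConnB t B' → B' = B

/-- A rightmost branch is nontrivial if it has at least two vertices. -/
def NontrivB (B : Set (List ℕ)) : Prop := ∃ p ∈ B, ∃ q ∈ B, p ≠ q

/-- `v` is the vertex of `B` nearest to the root. -/
def IsTop (B : Set (List ℕ)) (v : List ℕ) : Prop :=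
  v ∈ B ∧ ∀ u ∈ B, v.length ≤ u.length

/-- `v` is a subroot of `t`: the vertex of a nontrivial rightmost branch nearest to
the root. -/
def IsSubroot (t : PTree) (v : List ℕ) : Prop :=
  ∃ B, IsRBranch t B ∧ NontrivB B ∧ IsTop B v

/-- One step towards `m(v)`: pass to the last child. -/
def mstep (t : PTree) (v : List ℕ) : List ℕ := v ++ [childCount t v - 1]

/-- Auxiliary fuelled recursion computing `m(v)`. -/
def mpathAux (t : PTree) : ℕ → List ℕ → List ℕ
  | 0, v => v
  | n + 1, v => if childCount t v = 0 then v else mpathAux t n (mstep t v)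

/-- The leaf `m(v)` reached from the vertex `v` by repeatedly passing to the last
child (the fuel `sizeOf t` is larger than the height of `t`, so the iteration always
reaches the leaf). -/
noncomputable def mpath (t : PTree) (v : List ℕ) : List ℕ := mpathAux t (sizeOf t) v

/-- `d(v)`: the number of edges on the path from `v` to `m(v)`. -/
noncomputable def dd (t : PTree) (v : List ℕ) : ℕ := (mpath t v).length - v.length

/-- The number of leaves of `t`. -/
noncomputable def numLeavesP (t : PTree) : ℕ := {p | IsLeafV t p}.ncard

/-- The partial order `⪯` on the leaves of `t`: `l₁ ⪯ l₂` iff `l₁ = l₂` or there is a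
subroot `v` with `l₂ = m(v)` and `l₁ → v` (i.e. `v` lies on the path from `l₁` to the
root, i.e. `v` is a prefix of `l₁`). -/
def leafLe (t : PTree) (l₁ l₂ : List ℕ) : Prop :=
  l₁ = l₂ ∨ ∃ v, IsSubroot t v ∧ l₂ = mpath t v ∧ v <+: l₁

/-- `t` is a binary tree: every internal vertex has exactly two children. -/
def IsBinary (t : PTree) : Prop := ∀ p, IsInternalV t p → childCount t p = 2

end PTree

namespace PTree

-- auxiliary lemmas
theorem subtreeAt_cons (i : ℕ) (p : List ℕ) (t : PTree) :
    subtreeAt (i :: p) t = match (childrenL t)[i]? with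
      | some c => subtreeAt p c
      | none => none := rfl

theorem subtreeAt_append (p q : List ℕ) (t : PTree) :
    subtreeAt (p ++ q) t = (subtreeAt p t).bind (subtreeAt q) := by
  induction p generalizing t with
  | nil => simp [subtreeAt]
  | cons i p ih =>
      rw [List.cons_append, subtreeAt_cons, subtreeAt_cons]
      cases (childrenL t)[i]? with
      | none => simp
      | some c => simp [ih]

theorem childCount_eq (t : PTree) (p : List ℕ) (s : PTree) (h : subtreeAt p t = some s) :
    childCount t p = (childrenL s).length := by
  simp [childCount, h]

theorem isSome_getElem?' {α : Type*} {l : List α} {j : ℕ} : l[j]?.isSome ↔ j < l.length := by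
  simp

theorem subtreeAt_singleton (j : ℕ) (s : PTree) :
    subtreeAt [j] s = (childrenL s)[j]? := by
  rw [subtreeAt_cons]
  cases h : (childrenL s)[j]? <;> simp [subtreeAt]

theorem isVertex_append_singleton {t : PTree} {u : List ℕ} {j : ℕ} :
    IsVertex t (u ++ [j]) ↔ ∃ s, subtreeAt u t = some s ∧ j < (childrenL s).length := by
  rw [IsVertex, subtreeAt_append]
  cases h : subtreeAt u t with
  | none => simp
  | some s => simp [subtreeAt_singleton, isSome_getElem?']

theorem isVertex_append_singleton' {t : PTree} {u : List ℕ} {j : ℕ} :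
    IsVertex t (u ++ [j]) ↔ IsVertex t u ∧ j < childCount t u := by
  rw [isVertex_append_singleton]
  constructor
  · rintro ⟨s, hs, hj⟩
    exact ⟨by simp [IsVertex, hs], by rw [childCount_eq t u s hs]; exact hj⟩
  · rintro ⟨hv, hj⟩
    rw [IsVertex] at hv
    obtain ⟨s, hs⟩ := Option.isSome_iff_exists.mp hv
    exact ⟨s, hs, by rwa [childCount_eq t u s hs] at hj⟩

theorem IsVertex.prefix {t : PTree} {p q : List ℕ} (h : IsVertex t q) (hpq : p <+: q) :
    IsVertex t p := by
  obtain ⟨l, rfl⟩ := hpq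
  rw [IsVertex, subtreeAt_append] at h
  rw [IsVertex]
  cases hs : subtreeAt p t with
  | none => rw [hs] at h; simp at h
  | some s => simp

theorem isInternalV_iff {t : PTree} {p : List ℕ} :
    IsInternalV t p ↔ childCount t p ≠ 0 := by
  constructor
  · rintro ⟨a, b, r, h⟩
    rw [childCount_eq t p _ h]
    simp [childrenL]
  · intro h
    cases hs : subtreeAt p t with
    | none => simp [childCount, hs] at h
    | some s =>
        cases s with
        | leaf => rw [childCount_eq t p _ hs] at h; simp [childrenL] at h
        | node a b r => exact ⟨a, b, r, hs⟩

theorem IsInternalV.isVertex {t : PTree} {p : List ℕ} (h : IsInternalV t p) : IsVertex t p := by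
  obtain ⟨a, b, r, h⟩ := h; simp [IsVertex, h]

theorem IsInternalV.two_le {t : PTree} {p : List ℕ} (h : IsInternalV t p) :
    2 ≤ childCount t p := by
  obtain ⟨a, b, r, h⟩ := h
  rw [childCount_eq t p _ h]
  simp [childrenL]

theorem internal_of_vertex_append {t : PTree} {u : List ℕ} {j : ℕ}
    (h : IsVertex t (u ++ [j])) : IsInternalV t u := by
  obtain ⟨hv, hj⟩ := isVertex_append_singleton'.mp h
  exact isInternalV_iff.mpr (by omega)

theorem isLeafV_or_internal {t : PTree} {p : List ℕ} (h : IsVertex t p) :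
    IsLeafV t p ∨ IsInternalV t p := by
  rw [IsVertex] at h
  obtain ⟨s, hs⟩ := Option.isSome_iff_exists.mp h
  cases s with
  | leaf => exact Or.inl hs
  | node a b r => exact Or.inr ⟨a, b, r, hs⟩

theorem IsLeafV.childCount {t : PTree} {p : List ℕ} (h : IsLeafV t p) :
    childCount t p = 0 := by
  rw [childCount_eq t p _ h]; simp [childrenL]

end PTree
namespace PTree

theorem one_le_sizeOf (t : PTree) : 1 ≤ sizeOf t := by
  cases t <;> simp +arith +decide

theorem sizeOf_child {a b : PTree} {r : List PTree} {c : PTree} (h : c ∈ (a :: b :: r)) :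
    sizeOf c + 1 ≤ sizeOf (node a b r) := by
  have hb := one_le_sizeOf b
  have ha := one_le_sizeOf a
  have hr : 1 ≤ sizeOf r := by cases r <;> simp +arith +decide
  simp only [List.mem_cons] at h
  rcases h with rfl | rfl | h
  · simp +arith +decide
  · simp +arith +decide
  · have := List.sizeOf_lt_of_mem h
    simp +arith +decide
    omega

theorem length_lt_sizeOf {t : PTree} {p : List ℕ} (h : IsVertex t p) :
    p.length < sizeOf t := by
  induction p generalizing t with
  | nil => exact one_le_sizeOf t
  | cons i q ih =>
      cases t with
      | leaf =>
          exfalso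
          rw [IsVertex, subtreeAt_cons] at h
          simp [childrenL] at h
      | node a b r =>
          rw [IsVertex, subtreeAt_cons] at h
          cases hc : (childrenL (node a b r))[i]? with
          | none => rw [hc] at h; simp at h
          | some c =>
              rw [hc] at h
              have hq : IsVertex c q := h
              have hmem : c ∈ (a :: b :: r) := by
                have := List.getElem?_eq_some_iff.mp hc
                obtain ⟨hlt, hget⟩ := this
                rw [← hget]
                exact List.getElem_mem hlt
              have := sizeOf_child hmem
              have := ih hq
              simp only [List.length_cons]
              omega

theorem isVertex_mstep {t : PTree} {v : List ℕ} (h : IsInternalV t v) :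
    IsVertex t (mstep t v) := by
  rw [mstep, isVertex_append_singleton']
  have h2 := h.two_le
  exact ⟨h.isVertex, by omega⟩

theorem mpathAux_stab {t : PTree} : ∀ (n : ℕ) (v : List ℕ), IsVertex t v →
    sizeOf t ≤ v.length + n → mpathAux t (n + 1) v = mpathAux t n v := by
  intro n
  induction n with
  | zero =>
      intro v hv hle
      exact absurd hle (by have := length_lt_sizeOf hv; omega)
  | succ n ih =>
      intro v hv hle
      show (if childCount t v = 0 then v else mpathAux t (n+1) (mstep t v)) =
        (if childCount t v = 0 then v else mpathAux t n (mstep t v))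
      by_cases hc : childCount t v = 0
      · simp [hc]
      · simp only [hc, if_false]
        exact ih (mstep t v) (isVertex_mstep (isInternalV_iff.mpr hc))
          (by rw [mstep]; simp; omega)

theorem mpath_leaf {t : PTree} {v : List ℕ} (h : childCount t v = 0) :
    mpath t v = v := by
  rw [mpath]
  obtain ⟨k, hk⟩ : ∃ k, sizeOf t = k + 1 := ⟨sizeOf t - 1, by have := one_le_sizeOf t; omega⟩
  rw [hk]
  show (if childCount t v = 0 then v else _) = v
  simp [h]

theorem mpath_mstep {t : PTree} {v : List ℕ} (h : IsInternalV t v) :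
    mpath t v = mpath t (mstep t v) := by
  have hc := isInternalV_iff.mp h
  obtain ⟨k, hk⟩ : ∃ k, sizeOf t = k + 1 := ⟨sizeOf t - 1, by have := one_le_sizeOf t; omega⟩
  rw [mpath, mpath, hk]
  have : mpathAux t (k + 1) v = mpathAux t k (mstep t v) := by
    show (if childCount t v = 0 then v else _) = _
    simp [hc]
  rw [this]
  exact (mpathAux_stab k (mstep t v) (isVertex_mstep h) (by rw [mstep]; simp; omega)).symm

theorem length_le_mpathAux (t : PTree) : ∀ (n : ℕ) (v : List ℕ),
    v.length ≤ (mpathAux t n v).length := by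
  intro n
  induction n with
  | zero => intro v; simp [mpathAux]
  | succ n ih =>
      intro v
      show v.length ≤ (if childCount t v = 0 then v else mpathAux t n (mstep t v)).length
      by_cases hc : childCount t v = 0
      · simp [hc]
      · simp only [hc, if_false]
        have h1 := ih (mstep t v)
        have h2 : (mstep t v).length = v.length + 1 := by rw [mstep]; simp
        omega

theorem dd_leaf {t : PTree} {v : List ℕ} (h : IsLeafV t v) : dd t v = 0 := by
  rw [dd, mpath_leaf h.childCount]
  omega

theorem dd_mstep {t : PTree} {v : List ℕ} (h : IsInternalV t v) :
    dd t v = dd t (mstep t v) + 1 := by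
  rw [dd, dd, mpath_mstep h]
  have h1 : (mstep t v).length ≤ (mpath t (mstep t v)).length := by
    rw [mpath]; exact length_le_mpathAux t _ _
  rw [mstep] at h1 ⊢
  simp at h1 ⊢
  omega

end PTree
namespace PTree

def Good (t : PTree) (v : List ℕ) : Prop :=
  IsInternalV t v ∧ (v = [] ∨ ∃ u j, v = u ++ [j] ∧ j + 1 ≠ childCount t u)

theorem append_singleton_inj {u u' : List ℕ} {j j' : ℕ} (h : u ++ [j] = u' ++ [j']) :
    u = u' ∧ j = j' := by
  have := List.append_inj' h (by simp)
  exact ⟨this.1, by simpa using this.2⟩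

theorem Redge.vertex_src {t : PTree} {p q : List ℕ} (h : Redge t p q) : IsVertex t p :=
  h.1.isVertex

/-- The symmetric-in-`B` relation used in `ConnB`. -/
theorem rB_symm {t : PTree} {B : Set (List ℕ)} :
    Symmetric (fun x y => (Redge t x y ∨ Redge t y x) ∧ x ∈ B ∧ y ∈ B) :=
  fun _ _ ⟨h, hx, hy⟩ => ⟨h.symm, hy, hx⟩

theorem mem_of_redge_parent {t : PTree} {B : Set (List ℕ)} (hB : IsRBranch t B)
    {u p : List ℕ} (hp : p ∈ B) (he : Redge t u p) : u ∈ B := by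
  obtain ⟨hne, hvert, hconn, hmax⟩ := hB
  have hlift : ∀ x y, Relation.ReflTransGen
      (fun x y => (Redge t x y ∨ Redge t y x) ∧ x ∈ B ∧ y ∈ B) x y →
      Relation.ReflTransGen
      (fun x y => (Redge t x y ∨ Redge t y x) ∧ x ∈ insert u B ∧ y ∈ insert u B) x y := by
    intro x y h
    exact Relation.ReflTransGen.mono (by rintro x y ⟨h1, h2, h3⟩; exact ⟨h1, Set.mem_insert_of_mem _ h2, Set.mem_insert_of_mem _ h3⟩) x y h
  have hstep : Relation.ReflTransGen
      (fun x y => (Redge t x y ∨ Redge t y x) ∧ x ∈ insert u B ∧ y ∈ insert u B) u p :=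
    Relation.ReflTransGen.single ⟨Or.inl he, Set.mem_insert _ _, Set.mem_insert_of_mem _ hp⟩
  have hstep' : Relation.ReflTransGen
      (fun x y => (Redge t x y ∨ Redge t y x) ∧ x ∈ insert u B ∧ y ∈ insert u B) p u :=
    Relation.ReflTransGen.single ⟨Or.inr he, Set.mem_insert_of_mem _ hp, Set.mem_insert _ _⟩
  have hconn' : ConnB t (insert u B) := by
    intro x hx y hy
    rcases Set.mem_insert_iff.mp hx with hxu | hxB
    · subst hxu
      rcases Set.mem_insert_iff.mp hy with hyu | hyB
      · subst hyu; exact Relation.ReflTransGen.refl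
      · exact hstep.trans (hlift _ _ (hconn p hp y hyB))
    · rcases Set.mem_insert_iff.mp hy with hyu | hyB
      · subst hyu
        exact (hlift _ _ (hconn x hxB p hp)).trans hstep'
      · exact hlift _ _ (hconn x hxB y hyB)
  have hkey : insert u B = B := by
    apply hmax
    · exact Set.subset_insert _ _
    · intro x hx
      rcases Set.mem_insert_iff.mp hx with rfl | hx
      · exact he.vertex_src
      · exact hvert x hx
    · exact hconn'
  rw [← hkey]
  exact Set.mem_insert _ _

theorem msteps_prefix (t : PTree) (v : List ℕ) : ∀ k, v <+: (mstep t)^[k] v := by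
  intro k
  induction k with
  | zero => simp
  | succ k ih =>
      rw [Function.iterate_succ_apply']
      exact ih.trans ⟨_, rfl⟩

theorem msteps_length (t : PTree) (v : List ℕ) :
    ∀ k, ((mstep t)^[k] v).length = v.length + k := by
  intro k
  induction k with
  | zero => simp
  | succ k ih =>
      rw [Function.iterate_succ_apply', mstep]
      simp [ih]
      omega

theorem isSubroot_iff_good (t : PTree) (v : List ℕ) : IsSubroot t v ↔ Good t v := by
  constructor
  · rintro ⟨B, hB, hnt, htop⟩
    have hvB := htop.1
    have hvert := hB.2.1 v hvB
    -- v is internal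
    have hint : IsInternalV t v := by
      obtain ⟨p, hp, q, hq, hpq⟩ := hnt
      have hex : ∃ w ∈ B, w ≠ v := by
        by_cases hpv : p = v
        · exact ⟨q, hq, fun h => hpq (hpv.trans h.symm)⟩
        · exact ⟨p, hp, hpv⟩
      obtain ⟨w, hw, hwv⟩ := hex
      have hpath := hB.2.2.1 v hvB w hw
      rcases Relation.ReflTransGen.cases_head hpath with rfl | ⟨x, hvx, _⟩
      · exact absurd rfl hwv
      · rcases hvx.1 with he | he
        · exact he.1
        · exfalso
          have h1 := htop.2 x hvx.2.2
          have h2 : v.length = x.length + 1 := by rw [he.2.1]; simp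
          omega
    refine ⟨hint, ?_⟩
    rcases List.eq_nil_or_concat v with rfl | ⟨u, j, hv⟩
    · exact Or.inl rfl
    · rw [List.concat_eq_append] at hv
      subst hv
      refine Or.inr ⟨u, j, rfl, ?_⟩
      intro hcc
      have huint : IsInternalV t u := internal_of_vertex_append hvert
      have hj : j = childCount t u - 1 := by
        have := huint.two_le
        omega
      have he : Redge t u (u ++ [j]) := ⟨huint, by rw [hj], hvert⟩
      have huB := mem_of_redge_parent hB hvB he
      have := htop.2 u huB
      simp at this
  · rintro ⟨hint, hgood⟩
    set C : Set (List ℕ) := {w | IsVertex t w ∧ ∃ k, w = (mstep t)^[k] v} with hCdef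
    have hvC : v ∈ C := ⟨hint.isVertex, 0, rfl⟩
    have hverts : ∀ p ∈ C, IsVertex t p := fun p hp => hp.1
    -- connectivity from v to any element of C
    have hconn_v : ∀ k, IsVertex t ((mstep t)^[k] v) →
        Relation.ReflTransGen
          (fun x y => (Redge t x y ∨ Redge t y x) ∧ x ∈ C ∧ y ∈ C) v ((mstep t)^[k] v) := by
      intro k
      induction k with
      | zero => intro _; exact Relation.ReflTransGen.refl
      | succ k ih =>
          intro hw
          rw [Function.iterate_succ_apply'] at hw ⊢
          set x := (mstep t)^[k] v with hx
          have hxv : IsVertex t x := hw.prefix (by rw [mstep]; exact ⟨_, rfl⟩)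
          have hxint : IsInternalV t x := internal_of_vertex_append (by rw [mstep] at hw; exact hw)
          refine (ih hxv).tail ?_
          exact ⟨Or.inl ⟨hxint, rfl, hw⟩, ⟨hxv, k, rfl⟩, ⟨hw, k + 1, by rw [Function.iterate_succ_apply']⟩⟩
    have hconnC : ConnB t C := by
      intro p hp q hq
      obtain ⟨hpv, kp, rfl⟩ := hp
      obtain ⟨hqv, kq, rfl⟩ := hq
      exact ((haveI : Std.Symm (fun x y => (Redge t x y ∨ Redge t y x) ∧ x ∈ C ∧ y ∈ C) := ⟨fun _ _ h => rB_symm h⟩; Std.Symm.symm _ _ (hconn_v kp hpv))).trans (hconn_v kq hqv)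
    have hmax : ∀ B', C ⊆ B' → (∀ p ∈ B', IsVertex t p) → ConnB t B' → B' = C := by
      intro B' hsub hvert' hconn'
      refine Set.Subset.antisymm ?_ hsub
      intro w hw
      have hpath := hconn' v (hsub hvC) w hw
      clear hw
      induction hpath with
      | refl => exact hvC
      | tail hxy hstep ih =>
          rename_i x y
          have hxC : x ∈ C := ih
          obtain ⟨hxv, k, rfl⟩ := hxC
          rcases hstep.1 with he | he
          · refine ⟨he.2.2, k + 1, ?_⟩
            rw [Function.iterate_succ_apply', he.2.1]
            rfl
          · -- Redge y x : x = y ++ [childCount t y - 1]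
            cases k with
            | zero =>
                exfalso
                simp only [Function.iterate_zero, id] at he
                rcases hgood with rfl | ⟨u, j, huj, hne⟩
                · exact absurd he.2.1.symm (by simp)
                · have := append_singleton_inj (huj.symm.trans he.2.1)
                  obtain ⟨rfl, rfl⟩ := this
                  have := he.1.two_le
                  omega
            | succ k =>
                rw [Function.iterate_succ_apply'] at he
                have := append_singleton_inj he.2.1.symm
                exact ⟨he.1.isVertex, k, this.1⟩
    refine ⟨C, ⟨⟨v, hvC⟩, hverts, hconnC, hmax⟩, ?_, ?_⟩
    · refine ⟨v, hvC, mstep t v, ⟨isVertex_mstep hint, 1, by simp⟩, ?_⟩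
      intro h
      have : (mstep t v).length = v.length + 1 := by rw [mstep]; simp
      rw [← h] at this
      omega
    · refine ⟨hvC, ?_⟩
      rintro u ⟨huv, k, rfl⟩
      rw [msteps_length]
      omega

end PTree
namespace PTree

def ptree_rec {motive : PTree → Prop} (hleaf : motive leaf)
    (hnode : ∀ a b r, (∀ c ∈ a :: b :: r, motive c) → motive (node a b r)) :
    ∀ t, motive t
  | leaf => hleaf
  | node a b r => hnode a b r (fun c hc => ptree_rec hleaf hnode c)
termination_by t => sizeOf t
decreasing_by have := sizeOf_child hc; omega

def nLeaves : PTree → ℕ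
  | leaf => 1
  | node a b r => ((a :: b :: r).attach.map fun c => nLeaves c.1).sum
termination_by t => sizeOf t
decreasing_by have := sizeOf_child c.2; omega

def nInt : PTree → ℕ
  | leaf => 0
  | node a b r => 1 + ((a :: b :: r).attach.map fun c => nInt c.1).sum
termination_by t => sizeOf t
decreasing_by have := sizeOf_child c.2; omega

theorem nLeaves_node (a b : PTree) (r : List PTree) :
    nLeaves (node a b r) = ((a :: b :: r).map nLeaves).sum := by
  rw [nLeaves, List.attach_map_val]

theorem nInt_node (a b : PTree) (r : List PTree) :
    nInt (node a b r) = 1 + ((a :: b :: r).map nInt).sum := by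
  rw [nInt, List.attach_map_val]

theorem list_map_sum_fin {α : Type*} (l : List α) (f : α → ℕ) :
    ∑ i : Fin l.length, f l[i] = (l.map f).sum := by
  induction l with
  | nil => simp
  | cons x xs ih =>
      rw [List.map_cons, List.sum_cons, ← ih]
      exact Fin.sum_univ_succ _

-- transfer lemmas along children
theorem subtreeAt_cons_of_child {t : PTree} {i : ℕ} {c : PTree}
    (hc : (childrenL t)[i]? = some c) (q : List ℕ) :
    subtreeAt (i :: q) t = subtreeAt q c := by
  rw [subtreeAt_cons, hc]

theorem childCount_cons {t : PTree} {i : ℕ} {c : PTree}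
    (hc : (childrenL t)[i]? = some c) (q : List ℕ) :
    childCount t (i :: q) = childCount c q := by
  rw [childCount, childCount, subtreeAt_cons_of_child hc]

theorem subtreeAt_cons_none {t : PTree} {i : ℕ}
    (hc : (childrenL t)[i]? = none) (q : List ℕ) :
    subtreeAt (i :: q) t = none := by
  rw [subtreeAt_cons, hc]

theorem isLeafV_cons_iff {a b : PTree} {r : List PTree} {i : ℕ} {q : List ℕ} :
    IsLeafV (node a b r) (i :: q) ↔
      ∃ h : i < (a :: b :: r).length, IsLeafV (a :: b :: r)[i] q := by
  rw [IsLeafV]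
  cases hc : (childrenL (node a b r))[i]? with
  | none =>
      rw [subtreeAt_cons_none hc]
      have hn : ¬ i < (a :: b :: r).length := by
        have := List.getElem?_eq_none_iff.mp hc
        simpa [childrenL] using this
      constructor
      · intro h; exact absurd h (by simp)
      · rintro ⟨h, _⟩; exact absurd h hn
  | some c =>
      rw [subtreeAt_cons_of_child hc]
      obtain ⟨h1, h2⟩ := List.getElem?_eq_some_iff.mp hc
      have h1' : i < (a :: b :: r).length := by simpa [childrenL] using h1
      have h2' : (a :: b :: r)[i] = c := h2
      constructor
      · intro h; exact ⟨h1', by rw [h2']; exact h⟩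
      · rintro ⟨h, hh⟩; rw [h2'] at hh; exact hh

theorem isInternalV_cons_iff {a b : PTree} {r : List PTree} {i : ℕ} {q : List ℕ} :
    IsInternalV (node a b r) (i :: q) ↔
      ∃ h : i < (a :: b :: r).length, IsInternalV (a :: b :: r)[i] q := by
  cases hc : (childrenL (node a b r))[i]? with
  | none =>
      have hn : ¬ i < (a :: b :: r).length := by
        have := List.getElem?_eq_none_iff.mp hc
        simpa [childrenL] using this
      rw [IsInternalV]
      rw [subtreeAt_cons_none hc]
      constructor
      · rintro ⟨_, _, _, h⟩; simp at h
      · rintro ⟨h, _⟩; exact absurd h hn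
  | some c =>
      obtain ⟨h1, h2⟩ := List.getElem?_eq_some_iff.mp hc
      have h1' : i < (a :: b :: r).length := by simpa [childrenL] using h1
      have h2' : (a :: b :: r)[i] = c := h2
      rw [IsInternalV]
      rw [subtreeAt_cons_of_child hc]
      constructor
      · rintro ⟨x, y, z, h⟩; exact ⟨h1', x, y, z, by rw [h2']; exact h⟩
      · rintro ⟨h, x, y, z, hh⟩; rw [h2'] at hh; exact ⟨x, y, z, hh⟩

theorem childCount_root_node (a b : PTree) (r : List PTree) :
    childCount (node a b r) [] = (a :: b :: r).length := by
  rw [childCount]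
  simp [subtreeAt, childrenL]

theorem dd_cons_aux {t : PTree} {i : ℕ} {c : PTree}
    (hc : (childrenL t)[i]? = some c) :
    ∀ (s : PTree) (q : List ℕ), subtreeAt q c = some s → dd t (i :: q) = dd c q
  | leaf, q, hq => by
    have h1 : IsLeafV c q := hq
    have h2 : IsLeafV t (i :: q) := by
      rw [IsLeafV, subtreeAt_cons_of_child hc]; exact hq
    rw [dd_leaf h1, dd_leaf h2]
  | node x y z, q, hq => by
    have hint : IsInternalV c q := ⟨x, y, z, hq⟩
    have hintt : IsInternalV t (i :: q) :=
      ⟨x, y, z, by rw [subtreeAt_cons_of_child hc]; exact hq⟩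
    rw [dd_mstep hint, dd_mstep hintt]
    have hms : mstep t (i :: q) = i :: mstep c q := by
      rw [mstep, mstep, childCount_cons hc]
      rfl
    rw [hms]
    have hcc : childCount c q = (childrenL (node x y z)).length := childCount_eq c q _ hq
    have hj : childCount c q - 1 < (childrenL (node x y z)).length := by
      have := hint.two_le; omega
    have hsub : subtreeAt (mstep c q) c =
        some ((childrenL (node x y z))[childCount c q - 1]'hj) := by
      rw [mstep, subtreeAt_append, hq, Option.bind_some, subtreeAt_singleton]
      exact List.getElem?_eq_getElem hj
    have := dd_cons_aux hc _ (mstep c q) hsub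
    omega
termination_by s => sizeOf s
decreasing_by
  have hmem : (childrenL (node x y z))[childCount c q - 1]'hj ∈ (x :: y :: z) :=
    List.getElem_mem hj
  have := sizeOf_child hmem
  simp only [childrenL] at *
  omega

end PTree
namespace PTree

theorem ncard_eq_finsum {α : Type*} (s : Set α) (hs : s.Finite) :
    s.ncard = ∑ᶠ x ∈ s, (1 : ℕ) := by
  rw [finsum_mem_eq_finite_toFinset_sum _ hs, Finset.sum_const, smul_eq_mul, mul_one,
    Set.ncard_eq_toFinset_card s hs]

theorem disj_cons_images {m : ℕ} (A : Fin m → Set (List ℕ)) :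
    Pairwise (Function.onFun Disjoint fun i : Fin m => (fun q => (i : ℕ) :: q) '' A i) := by
  intro i j hij
  rw [Function.onFun, Set.disjoint_left]
  rintro x ⟨q, _, rfl⟩ ⟨q', _, h⟩
  injection h with h1 h2
  exact hij (Fin.ext h1.symm)

theorem cons_injOn (i : ℕ) (A : Set (List ℕ)) :
    Set.InjOn (fun q => i :: q) A := by
  intro x _ y _ h
  injection h

theorem isLeafV_leaf_iff {p : List ℕ} : IsLeafV leaf p ↔ p = [] := by
  cases p with
  | nil => simp [IsLeafV, subtreeAt]
  | cons i q =>
      rw [IsLeafV, subtreeAt_cons_none (by simp [childrenL])]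
      simp

theorem not_good_leaf (v : List ℕ) : ¬ Good leaf v := by
  rintro ⟨⟨a, b, r, h⟩, -⟩
  cases v with
  | nil => rw [show subtreeAt [] leaf = some leaf from rfl] at h; simp at h
  | cons i q => rw [subtreeAt_cons_none (by simp [childrenL])] at h; simp at h

theorem leafSet_node (a b : PTree) (r : List PTree) :
    {p | IsLeafV (node a b r) p} =
      ⋃ i : Fin (a :: b :: r).length,
        (fun q => (i : ℕ) :: q) '' {q | IsLeafV ((a :: b :: r)[i]) q} := by
  ext p
  cases p with
  | nil =>
      simp only [Set.mem_setOf_eq, Set.mem_iUnion, Set.mem_image]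
      constructor
      · intro h
        exact absurd h (by rw [IsLeafV]; simp [subtreeAt])
      · rintro ⟨i, q, -, h⟩; simp at h
  | cons i q =>
      simp only [Set.mem_setOf_eq, Set.mem_iUnion, Set.mem_image]
      rw [isLeafV_cons_iff]
      constructor
      · rintro ⟨h, hl⟩; exact ⟨⟨i, h⟩, q, hl, rfl⟩
      · rintro ⟨⟨j, hj⟩, q', hq', heq⟩
        injection heq with h1 h2
        subst h1; subst h2
        exact ⟨hj, hq'⟩

theorem good_root_node (a b : PTree) (r : List PTree) : Good (node a b r) [] :=
  ⟨⟨a, b, r, rfl⟩, Or.inl rfl⟩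

theorem getElem?_childrenL {a b : PTree} {r : List PTree} {i : ℕ}
    (h : i < (a :: b :: r).length) :
    (childrenL (node a b r))[i]? = some ((a :: b :: r)[i]) :=
  List.getElem?_eq_getElem (by simpa [childrenL] using h)

theorem good_cons_iff {a b : PTree} {r : List PTree} {i : ℕ} {q : List ℕ} :
    Good (node a b r) (i :: q) ↔
      ∃ h : i < (a :: b :: r).length,
        Good ((a :: b :: r)[i]) q ∧ (q ≠ [] ∨ i + 1 ≠ (a :: b :: r).length) := by
  constructor
  · rintro ⟨hint, hsec⟩
    obtain ⟨h, hint'⟩ := isInternalV_cons_iff.mp hint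
    rcases hsec with habs | ⟨u, j, huj, hne⟩
    · simp at habs
    · rcases List.eq_nil_or_concat q with rfl | ⟨q', j', hq⟩
      · have heq : ([] : List ℕ) ++ [i] = u ++ [j] := by simpa using huj
        obtain ⟨rfl, rfl⟩ := append_singleton_inj heq
        rw [childCount_root_node] at hne
        exact ⟨h, ⟨hint', Or.inl rfl⟩, Or.inr hne⟩
      · rw [List.concat_eq_append] at hq
        subst hq
        have heq : (i :: q') ++ [j'] = u ++ [j] := by simpa using huj
        obtain ⟨rfl, rfl⟩ := append_singleton_inj heq
        rw [childCount_cons (getElem?_childrenL h)] at hne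
        refine ⟨h, ⟨hint', Or.inr ⟨q', j', rfl, hne⟩⟩, Or.inl (by simp)⟩
  · rintro ⟨h, ⟨hint', hsec'⟩, hdisj⟩
    refine ⟨isInternalV_cons_iff.mpr ⟨h, hint'⟩, ?_⟩
    rcases hsec' with rfl | ⟨u', j', hq, hne⟩
    · rcases hdisj with habs | hne
      · exact absurd rfl habs
      · refine Or.inr ⟨[], i, by simp, ?_⟩
        rw [childCount_root_node]
        exact hne
    · subst hq
      refine Or.inr ⟨i :: u', j', by simp, ?_⟩
      rw [childCount_cons (getElem?_childrenL h)]
      exact hne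

theorem goodSet_node (a b : PTree) (r : List PTree) :
    {v | Good (node a b r) v} =
      insert [] (⋃ i : Fin (a :: b :: r).length,
        (fun q => (i : ℕ) :: q) ''
          {q | Good ((a :: b :: r)[i]) q ∧ (q ≠ [] ∨ (i : ℕ) + 1 ≠ (a :: b :: r).length)}) := by
  ext p
  cases p with
  | nil =>
      simp only [Set.mem_setOf_eq, Set.mem_insert_iff]
      exact iff_of_true (good_root_node a b r) (Or.inl trivial)
  | cons i q =>
      simp only [Set.mem_setOf_eq, Set.mem_insert_iff, Set.mem_iUnion, Set.mem_image]
      rw [good_cons_iff]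
      constructor
      · rintro ⟨h, hg⟩; exact Or.inr ⟨⟨i, h⟩, q, hg, rfl⟩
      · rintro (habs | ⟨⟨j, hj⟩, q', hq', heq⟩)
        · simp at habs
        · injection heq with h1 h2
          subst h1; subst h2
          exact ⟨hj, hq'⟩

theorem leafSet_spec : ∀ t : PTree,
    {p | IsLeafV t p}.Finite ∧ {p | IsLeafV t p}.ncard = nLeaves t := by
  refine ptree_rec ?_ ?_
  · have hset : {p | IsLeafV leaf p} = {([] : List ℕ)} := by
      ext p; simp [isLeafV_leaf_iff]
    rw [hset]
    refine ⟨Set.finite_singleton _, ?_⟩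
    rw [Set.ncard_singleton, nLeaves]
  · intro a b r IH
    have hdec := leafSet_node a b r
    have hfin_i : ∀ i : Fin (a :: b :: r).length,
        ((fun q => (i : ℕ) :: q) '' {q | IsLeafV ((a :: b :: r)[i]) q}).Finite :=
      fun i => ((IH _ (List.getElem_mem i.2)).1).image _
    have hfin : {p | IsLeafV (node a b r) p}.Finite := by
      rw [hdec]; exact Set.finite_iUnion hfin_i
    refine ⟨hfin, ?_⟩
    rw [ncard_eq_finsum _ hfin]
    calc ∑ᶠ p ∈ {p | IsLeafV (node a b r) p}, (1 : ℕ)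
        = ∑ᶠ i : Fin (a :: b :: r).length,
            ∑ᶠ p ∈ (fun q => (i : ℕ) :: q) '' {q | IsLeafV ((a :: b :: r)[i]) q}, (1 : ℕ) := by
          rw [hdec]; exact finsum_mem_iUnion (disj_cons_images _) hfin_i
      _ = ∑ᶠ i : Fin (a :: b :: r).length,
            ∑ᶠ q ∈ {q | IsLeafV ((a :: b :: r)[i]) q}, (1 : ℕ) := by
          exact finsum_congr fun i => finsum_mem_image (cons_injOn _ _)
      _ = ∑ i : Fin (a :: b :: r).length, nLeaves ((a :: b :: r)[i]) := by
          rw [finsum_eq_sum_of_fintype]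
          refine Finset.sum_congr rfl fun i _ => ?_
          have h := IH ((a :: b :: r)[i]) (List.getElem_mem i.isLt)
          rw [← h.2, ncard_eq_finsum _ h.1]
      _ = nLeaves (node a b r) := by
          rw [list_map_sum_fin, nLeaves_node]

end PTree
namespace PTree

theorem goodSet_spec : ∀ t : PTree,
    {v | Good t v}.Finite ∧ (∑ᶠ v ∈ {v | Good t v}, dd t v) = nInt t := by
  refine ptree_rec ?_ ?_
  · have hset : {v | Good leaf v} = ∅ := by
      ext v; simp only [Set.mem_setOf_eq, Set.mem_empty_iff_false, iff_false]
      exact not_good_leaf v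
    rw [hset]
    exact ⟨Set.finite_empty, by rw [finsum_mem_empty, nInt]⟩
  · intro a b r IH
    set l := a :: b :: r with hl
    set m := l.length with hm
    have hm2 : 2 ≤ m := by rw [hm, hl]; simp [List.length_cons]
    set A : Fin m → Set (List ℕ) :=
      fun i => {q | Good (l[i]) q ∧ (q ≠ [] ∨ (i : ℕ) + 1 ≠ m)} with hA
    have hchild := fun i : Fin m => IH (l[i]) (List.getElem_mem i.isLt)
    have hfinA : ∀ i : Fin m, (A i).Finite :=
      fun i => Set.Finite.subset (hchild i).1 (fun q hq => hq.1)
    have hfinI : ∀ i : Fin m, ((fun q => (i : ℕ) :: q) '' A i).Finite :=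
      fun i => (hfinA i).image _
    have hdec : {v | Good (node a b r) v} =
        insert [] (⋃ i : Fin m, (fun q => (i : ℕ) :: q) '' A i) := goodSet_node a b r
    have hfinU : (⋃ i : Fin m, (fun q => (i : ℕ) :: q) '' A i).Finite :=
      Set.finite_iUnion hfinI
    have hfin : {v | Good (node a b r) v}.Finite := by
      rw [hdec]; exact hfinU.insert _
    refine ⟨hfin, ?_⟩
    have hnotmem : ([] : List ℕ) ∉ ⋃ i : Fin m, (fun q => (i : ℕ) :: q) '' A i := by
      rw [Set.mem_iUnion]
      rintro ⟨i, q, -, h⟩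
      simp at h
    -- subroot for the last child
    set lastI : Fin m := ⟨m - 1, by omega⟩ with hlastI
    have hlast : (lastI : ℕ) + 1 = m := by rw [hlastI]; simp; omega
    -- per-child sums
    have hAsum : ∀ i : Fin m,
        (∑ᶠ q ∈ A i, dd (l[i]) q) + (if (i : ℕ) + 1 = m then dd (l[i]) [] else 0)
          = nInt (l[i]) := by
      intro i
      by_cases hc : (i : ℕ) + 1 = m
      · rw [if_pos hc]
        by_cases hg : Good (l[i]) []
        · have hAi : {q | Good (l[i]) q} = insert [] (A i) := by
            ext q
            simp only [Set.mem_setOf_eq, Set.mem_insert_iff, hA]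
            constructor
            · intro hq
              by_cases hqe : q = []
              · exact Or.inl hqe
              · exact Or.inr ⟨hq, Or.inl hqe⟩
            · rintro (rfl | ⟨hq, -⟩)
              · exact hg
              · exact hq
          have hniA : ([] : List ℕ) ∉ A i := by
            rw [hA]
            rintro ⟨-, h | h⟩
            · exact h rfl
            · exact h hc
          have h2 := (hchild i).2
          rw [hAi, finsum_mem_insert _ hniA (hfinA i)] at h2
          omega
        · have hAi : A i = {q | Good (l[i]) q} := by
            ext q
            simp only [Set.mem_setOf_eq, hA]
            constructor
            · exact fun h => h.1
            · intro hq
              refine ⟨hq, Or.inl ?_⟩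
              rintro rfl
              exact hg hq
          have hleafroot : IsLeafV (l[i]) [] := by
            have hv : IsVertex (l[i]) [] := by simp [IsVertex, subtreeAt]
            rcases isLeafV_or_internal hv with h | h
            · exact h
            · exact absurd ⟨h, Or.inl rfl⟩ hg
          rw [hAi, (hchild i).2, dd_leaf hleafroot]
          omega
      · rw [if_neg hc]
        have hAi : A i = {q | Good (l[i]) q} := by
          ext q
          simp only [Set.mem_setOf_eq, hA]
          exact ⟨fun h => h.1, fun hq => ⟨hq, Or.inr hc⟩⟩
        rw [hAi, (hchild i).2]
        omega
    -- root dd value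
    have hroot : IsInternalV (node a b r) [] := ⟨a, b, r, rfl⟩
    have hmsr : mstep (node a b r) [] = (m - 1) :: [] := by
      rw [mstep, childCount_root_node]
      rfl
    have hddroot : dd (node a b r) [] = dd (l[lastI]) [] + 1 := by
      rw [dd_mstep hroot, hmsr]
      congr 1
      exact dd_cons_aux (getElem?_childrenL (by rw [← hl, ← hm]; omega)) (l[lastI]) [] rfl
    -- assemble
    rw [hdec, finsum_mem_insert _ hnotmem hfinU,
      finsum_mem_iUnion (disj_cons_images A) hfinI]
    have hstep1 : ∀ i : Fin m,
        (∑ᶠ v ∈ (fun q => (i : ℕ) :: q) '' A i, dd (node a b r) v)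
          = ∑ᶠ q ∈ A i, dd (l[i]) q := by
      intro i
      rw [finsum_mem_image (cons_injOn _ _)]
      refine finsum_mem_congr rfl fun q hq => ?_
      obtain ⟨s, hs⟩ := Option.isSome_iff_exists.mp hq.1.1.isVertex
      exact dd_cons_aux (getElem?_childrenL i.isLt) s q hs
    rw [finsum_congr hstep1, finsum_eq_sum_of_fintype]
    have hsum1 : ∑ i : Fin m, ((∑ᶠ q ∈ A i, dd (l[i]) q)
          + (if (i : ℕ) + 1 = m then dd (l[i]) [] else 0))
        = ∑ i : Fin m, nInt (l[i]) := Finset.sum_congr rfl fun i _ => hAsum i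
    rw [Finset.sum_add_distrib] at hsum1
    have hsum2 : ∑ i : Fin m, (if (i : ℕ) + 1 = m then dd (l[i]) [] else 0)
        = dd (l[lastI]) [] := by
      have : ∀ i : Fin m, (if (i : ℕ) + 1 = m then dd (l[i]) [] else 0)
          = (if i = lastI then dd (l[i]) [] else 0) := by
        intro i
        congr 1
        simp only [eq_iff_iff]
        constructor
        · intro h; exact Fin.ext (by rw [hlastI]; simp; omega)
        · rintro rfl; exact hlast
      rw [Finset.sum_congr rfl fun i _ => this i]
      rw [Finset.sum_ite_eq' Finset.univ lastI (fun i => dd (l[i]) [])]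
      simp
    rw [hsum2] at hsum1
    have hnint : nInt (node a b r) = 1 + ∑ i : Fin m, nInt (l[i]) := by
      rw [nInt_node, ← list_map_sum_fin]
    omega

end PTree
namespace PTree

def BinT : PTree → Prop
  | leaf => True
  | node a b r => r = [] ∧ BinT a ∧ BinT b

theorem not_isInternalV_leaf (p : List ℕ) : ¬ IsInternalV leaf p := by
  rintro ⟨a, b, r, h⟩
  cases p with
  | nil => rw [show subtreeAt [] leaf = some leaf from rfl] at h; simp at h
  | cons i q => rw [subtreeAt_cons_none (by simp [childrenL])] at h; simp at h

theorem isBinary_child {t : PTree} {i : ℕ} {c : PTree}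
    (hc : (childrenL t)[i]? = some c) (h : IsBinary t) : IsBinary c := by
  intro p hp
  obtain ⟨x, y, z, hs⟩ := hp
  have hint : IsInternalV t (i :: p) :=
    ⟨x, y, z, by rw [subtreeAt_cons_of_child hc]; exact hs⟩
  have := h _ hint
  rwa [childCount_cons hc] at this

theorem isBinary_iff_binT : ∀ t : PTree, IsBinary t ↔ BinT t := by
  refine ptree_rec ?_ ?_
  · constructor
    · intro _; trivial
    · intro _ p hp; exact absurd hp (not_isInternalV_leaf p)
  · intro a b r IH
    constructor
    · intro h
      have hcc := h [] ⟨a, b, r, rfl⟩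
      rw [childCount_root_node] at hcc
      have hr : r = [] := by
        simp only [List.length_cons] at hcc
        exact List.length_eq_zero_iff.mp (by omega)
      have ha : (childrenL (node a b r))[0]? = some a := by simp [childrenL]
      have hb : (childrenL (node a b r))[1]? = some b := by simp [childrenL]
      exact ⟨hr, (IH a (by simp)).mp (isBinary_child ha h),
        (IH b (by simp)).mp (isBinary_child hb h)⟩
    · rintro ⟨rfl, hba, hbb⟩
      intro p hp
      cases p with
      | nil => rw [childCount_root_node]; rfl
      | cons i q =>
          obtain ⟨hi, hint⟩ := isInternalV_cons_iff.mp hp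
          rw [childCount_cons (getElem?_childrenL hi)]
          simp only [List.length_cons, List.length_nil] at hi
          interval_cases i
          · exact (IH a (by simp)).mpr hba q hint
          · exact (IH b (by simp)).mpr hbb q hint

theorem binT_count : ∀ t : PTree,
    (BinT t → nLeaves t = nInt t + 1) ∧ (nInt t + 1 ≤ nLeaves t) ∧
      (¬ BinT t → nInt t + 2 ≤ nLeaves t) := by
  refine ptree_rec ?_ ?_
  · refine ⟨fun _ => by rw [nLeaves, nInt], by rw [nLeaves, nInt], fun h => absurd trivial h⟩
  · intro a b r IH
    set l := a :: b :: r with hl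
    set m := l.length with hm
    have hm2 : 2 ≤ m := by rw [hm, hl]; simp [List.length_cons]
    have e1 : nLeaves (node a b r) = ∑ i : Fin m, nLeaves (l[i]) := by
      rw [nLeaves_node, ← list_map_sum_fin]
    have e2 : nInt (node a b r) = 1 + ∑ i : Fin m, nInt (l[i]) := by
      rw [nInt_node, ← list_map_sum_fin]
    have hchild := fun i : Fin m => IH (l[i]) (List.getElem_mem i.isLt)
    have hge : ∑ i : Fin m, (nInt (l[i]) + 1) ≤ ∑ i : Fin m, nLeaves (l[i]) :=
      Finset.sum_le_sum fun i _ => (hchild i).2.1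
    rw [Finset.sum_add_distrib, Finset.sum_const, Finset.card_univ, Fintype.card_fin,
      smul_eq_mul, mul_one] at hge
    have hab : nLeaves (node a b []) = nLeaves a + nLeaves b := by
      rw [nLeaves_node]; simp
    have iab : nInt (node a b []) = 1 + (nInt a + nInt b) := by
      rw [nInt_node]; simp
    refine ⟨?_, by omega, ?_⟩
    · rintro ⟨rfl, hba, hbb⟩
      have h1 := (IH a (by rw [hl]; simp)).1 hba
      have h2 := (IH b (by rw [hl]; simp)).1 hbb
      rw [hab, iab]
      omega
    · intro hnb
      by_cases hr : r = []
      · subst hr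
        have hnab : ¬ BinT a ∨ ¬ BinT b := by
          by_contra hcon
          push_neg at hcon
          exact hnb ⟨rfl, hcon.1, hcon.2⟩
        have h1 := (IH a (by rw [hl]; simp)).2.1
        have h2 := (IH b (by rw [hl]; simp)).2.1
        rw [hab, iab]
        rcases hnab with h | h
        · have := (IH a (by rw [hl]; simp)).2.2 h
          omega
        · have := (IH b (by rw [hl]; simp)).2.2 h
          omega
      · have hm3 : 3 ≤ m := by
          rw [hm, hl]
          have : r.length ≠ 0 := fun hh => hr (List.length_eq_zero_iff.mp hh)
          simp only [List.length_cons]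
          omega
        omega

end PTree

open PTree in
/-- **Theorem.** A planar rooted tree `Γ ∈ 𝒯_n` (every internal vertex has at least two
children, `n` leaves) is binary (every internal vertex has exactly two children) if and
only if `∑_{v ∈ R(Γ)} d(v) = n − 1`. -/
theorem isBinary_iff_sum_dd_eq (t : PTree) (n : ℕ) (hn : numLeavesP t = n) :
    IsBinary t ↔ (∑ᶠ v ∈ {v | IsSubroot t v}, dd t v) = n - 1 := by
  have hset : {v | IsSubroot t v} = {v | Good t v} := Set.ext (isSubroot_iff_good t)
  rw [hset, (goodSet_spec t).2, isBinary_iff_binT]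
  have hn' : nLeaves t = n := by
    have h0 : {p | IsLeafV t p}.ncard = n := hn
    rw [← h0, (leafSet_spec t).2]
  have hc := binT_count t
  constructor
  · intro hb
    have := hc.1 hb
    omega
  · intro h
    by_contra hnb
    have h1 := hc.2.2 hnb
    omega
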